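/- arXiv:2203.08659 — 6 statements merged into one kernel-verified Lean document; each statement's English description precedes it below -/
import Mathlib

section
/- If a flow map φ : ℝ≥0 × ℝ^N → ℝ^N is monotone (x ⪰ y implies φ(t,x) ⪰ φ(t,y) for all t, where ⪰ denotes componentwise inequality) and translation invariant (φ(t, x + δ·𝟏) = φ(t,x) + δ·𝟏 for all δ ∈ ℝ, where 𝟏 is the all-ones vector), then φ is weakly contracting in the infinity norm: ‖φ(t,x) − φ(t,y)‖_∞ ≤ ‖x − y‖_∞ for all t ≥ 0 and all x, y ∈ ℝ^N. -/
/-!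
Write `c = ‖x - y‖_∞`, so that `x ≤ y + c·𝟏` and `y ≤ x + c·𝟏` componentwise. Monotonicity and
translation invariance turn these into `φ(t,x) ≤ φ(t,y) + c·𝟏` and `φ(t,y) ≤ φ(t,x) + c·𝟏`,
which together say `‖φ(t,x) - φ(t,y)‖_∞ ≤ c`.
-/

section

variable {ι : Type*} {f : (ι → ℝ) → ι → ℝ}

theorem apply_le_add_of_le_add_const (hf : Monotone f)
    (hf_add : ∀ (x : ι → ℝ) (c : ℝ), f (fun i => x i + c) = fun i => f x i + c)
    {x y : ι → ℝ} {c : ℝ} (hxy : ∀ i, x i ≤ y i + c) (i : ι) : f x i ≤ f y i + c := by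
  simpa only [hf_add] using hf hxy i

theorem norm_sub_le_of_monotone_of_map_add_const [Fintype ι] (hf : Monotone f)
    (hf_add : ∀ (x : ι → ℝ) (c : ℝ), f (fun i => x i + c) = fun i => f x i + c)
    (x y : ι → ℝ) : ‖f x - f y‖ ≤ ‖x - y‖ := by
  have hcoord (i : ι) : |x i - y i| ≤ ‖x - y‖ := by
    simpa only [Pi.sub_apply, Real.norm_eq_abs] using norm_le_pi_norm (x - y) i
  have hx_le : ∀ i, x i ≤ y i + ‖x - y‖ := fun i => by
    linarith [(abs_sub_le_iff.mp (hcoord i)).1]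
  have hy_le : ∀ i, y i ≤ x i + ‖x - y‖ := fun i => by
    linarith [(abs_sub_le_iff.mp (hcoord i)).2]
  refine (pi_norm_le_iff_of_nonneg (norm_nonneg _)).mpr fun i => ?_
  rw [Pi.sub_apply, Real.norm_eq_abs, abs_sub_le_iff]
  exact ⟨by linarith [apply_le_add_of_le_add_const hf hf_add hx_le i],
    by linarith [apply_le_add_of_le_add_const hf hf_add hy_le i]⟩

end

theorem weak_contraction_of_monotone_translation_invariant_general
    (N : ℕ)
    (φ : ℝ → (Fin N → ℝ) → (Fin N → ℝ))
    (hmono : ∀ t : ℝ, 0 ≤ t → ∀ x y : Fin N → ℝ,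
      (∀ i, y i ≤ x i) → ∀ i, φ t y i ≤ φ t x i)
    (htrans : ∀ t : ℝ, 0 ≤ t → ∀ (x : Fin N → ℝ) (δ : ℝ),
      φ t (fun i => x i + δ) = fun i => φ t x i + δ) :
    ∀ t : ℝ, 0 ≤ t → ∀ x y : Fin N → ℝ, ‖φ t x - φ t y‖ ≤ ‖x - y‖ := fun t ht =>
  norm_sub_le_of_monotone_of_map_add_const (fun x y hxy => hmono t ht y x hxy) (htrans t ht)

/-- Monotone and translation-invariant flows are weakly contracting in the sup norm. -/
theorem weak_contraction_of_monotone_translation_invariant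
    (N : ℕ) (hN : 1 ≤ N)
    (φ : ℝ → (Fin N → ℝ) → (Fin N → ℝ))
    (hmono : ∀ t : ℝ, 0 ≤ t → ∀ x y : Fin N → ℝ,
      (∀ i, y i ≤ x i) → ∀ i, φ t y i ≤ φ t x i)
    (htrans : ∀ t : ℝ, 0 ≤ t → ∀ (x : Fin N → ℝ) (δ : ℝ),
      φ t (fun i => x i + δ) = fun i => φ t x i + δ) :
    ∀ t : ℝ, 0 ≤ t → ∀ x y : Fin N → ℝ, ‖φ t x - φ t y‖ ≤ ‖x - y‖ :=
  weak_contraction_of_monotone_translation_invariant_general N φ hmono htrans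
end

section
/- (Discrete-time necessity.) Let T = {1,…,T} be a finite time horizon, and suppose d : T → [0,∞) is feasible for the fleet: there exist u_j : T → ℝ with 0 ≤ u_j(k) ≤ P̄_j for all k, u_j(k) = 0 for k ∉ A_j, ∑_{j∈N} u_j(k) = d(k) for all k, and ∑_{k∈T} u_j(k) ≤ P̄_j · x_j(0) for each j. Then for every subset W ⊆ T, ∑_{k∈W} d(k) ≤ ∑_{j∈N} min{card(A_j ∩ W), x_j(0)} · P̄_j. -/
open Finset

theorem sum_le_min_card_inter_mul {α : Type*} [DecidableEq α] {S A W : Finset α} {u : α → ℝ}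
    {P x : ℝ} (hP : 0 ≤ P) (hA : A ⊆ S) (hW : W ⊆ S)
    (hu : ∀ k ∈ S, 0 ≤ u k ∧ u k ≤ P) (havail : ∀ k ∈ S, k ∉ A → u k = 0)
    (henergy : ∑ k ∈ S, u k ≤ P * x) :
    ∑ k ∈ W, u k ≤ min ((A ∩ W).card : ℝ) x * P := by
  have hrestrict : ∑ k ∈ W, u k = ∑ k ∈ A ∩ W, u k :=
    (sum_subset inter_subset_right fun k hkW hk =>
      havail k (hW hkW) fun hkA => hk (mem_inter.mpr ⟨hkA, hkW⟩)).symm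
  rw [hrestrict, min_mul_of_nonneg _ _ hP]
  refine le_min ?_ ?_
  · calc ∑ k ∈ A ∩ W, u k ≤ (A ∩ W).card • P :=
          sum_le_card_nsmul _ _ _ fun k hk => (hu k (hW (mem_inter.mp hk).2)).2
      _ = (A ∩ W).card * P := nsmul_eq_mul _ _
  · calc ∑ k ∈ A ∩ W, u k ≤ ∑ k ∈ S, u k :=
          sum_le_sum_of_subset_of_nonneg (inter_subset_left.trans hA) fun k hk _ => (hu k hk).1
      _ ≤ P * x := henergy
      _ = x * P := mul_comm _ _

theorem discrete_aggregate_constraints_necessary_general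
    {ι : Type*} [Fintype ι] [DecidableEq ℕ] (T : ℕ)
    (P x0 : ι → ℝ) (hP : ∀ j, 0 < P j)
    (A : ι → Finset ℕ) (hAsub : ∀ j, A j ⊆ Finset.Icc 1 T)
    (d : ℕ → ℝ) (u : ι → ℕ → ℝ)
    (hubd : ∀ j, ∀ k ∈ Finset.Icc 1 T, 0 ≤ u j k ∧ u j k ≤ P j)
    (havail : ∀ j, ∀ k ∈ Finset.Icc 1 T, k ∉ A j → u j k = 0)
    (hsum : ∀ k ∈ Finset.Icc 1 T, ∑ j, u j k = d k)
    (henergy : ∀ j, ∑ k ∈ Finset.Icc 1 T, u j k ≤ P j * x0 j) :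
    ∀ W ⊆ Finset.Icc 1 T,
      ∑ k ∈ W, d k ≤ ∑ j, min ((A j ∩ W).card : ℝ) (x0 j) * P j := by
  intro W hW
  calc ∑ k ∈ W, d k = ∑ j, ∑ k ∈ W, u j k := by
        rw [sum_comm]
        exact sum_congr rfl fun k hk => (hsum k (hW hk)).symm
    _ ≤ ∑ j, min ((A j ∩ W).card : ℝ) (x0 j) * P j :=
        sum_le_sum fun j _ => sum_le_min_card_inter_mul (hP j).le (hAsub j) hW (hubd j)
          (havail j) (henergy j)

/-- Discrete-time necessity of the aggregate flexibility constraints. -/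
theorem discrete_aggregate_constraints_necessary
    {ι : Type*} [Fintype ι] [DecidableEq ℕ] (T : ℕ)
    (P x0 : ι → ℝ) (hP : ∀ j, 0 < P j) (hx0 : ∀ j, 0 ≤ x0 j)
    (A : ι → Finset ℕ) (hAsub : ∀ j, A j ⊆ Finset.Icc 1 T)
    (d : ℕ → ℝ) (u : ι → ℕ → ℝ)
    (hubd : ∀ j, ∀ k ∈ Finset.Icc 1 T, 0 ≤ u j k ∧ u j k ≤ P j)
    (havail : ∀ j, ∀ k ∈ Finset.Icc 1 T, k ∉ A j → u j k = 0)
    (hsum : ∀ k ∈ Finset.Icc 1 T, ∑ j, u j k = d k)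
    (henergy : ∀ j, ∑ k ∈ Finset.Icc 1 T, u j k ≤ P j * x0 j) :
    ∀ W ⊆ Finset.Icc 1 T,
      ∑ k ∈ W, d k ≤ ∑ j, min ((A j ∩ W).card : ℝ) (x0 j) * P j :=
  discrete_aggregate_constraints_necessary_general T P x0 hP A hAsub d u hubd havail hsum henergy
end

section
/- (No causal dispatch policy exists.) With the two-battery fleet of the previous example (P̄₁ = P̄₂ = 1, E₁(0) = 3, E₂(0) = 6, A₁ = [0,5], A₂ = [0,12], T = [0,12]), define d₁(t) = 1 on [0,3] ∪ [5,11], 0 elsewhere, and d₂(t) = 2 on [2,5], 1 on [0,2] ∪ [5,6], 0 elsewhere. Both d₁ and d₂ are feasible and coincide on [0,2]. However, every feasible dispatch of d₁ has ∫_0^2 u₁(t) dt = 2, while every feasible dispatch of d₂ has ∫_0^2 u₂(t) dt = 2 (hence ∫_0^2 u₁ dt = 0). Consequently, there is no single causal policy (a map assigning u(t) as a function only of the demand restricted to [0,t] and the current state) that dispatches every feasible demand signal for this fleet. -/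
open MeasureTheory

/-- A feasible dispatch of demand `d` over `T=[0,12]` for the two-device fleet with
unit rated powers, energies 3 and 6, availability `A₁=[0,5]`, `A₂=[0,12]`. -/
def TwoBatFeasible (d u₁ u₂ : ℝ → ℝ) : Prop :=
  Measurable u₁ ∧ Measurable u₂ ∧
  (∀ t ∈ Set.Icc (0 : ℝ) 12, 0 ≤ u₁ t ∧ u₁ t ≤ 1 ∧ 0 ≤ u₂ t ∧ u₂ t ≤ 1) ∧
  (∀ t ∈ Set.Icc (0 : ℝ) 12, 5 < t → u₁ t = 0) ∧
  (∀ t ∈ Set.Icc (0 : ℝ) 12, u₁ t + u₂ t = d t) ∧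
  (∫ t in Set.Icc (0 : ℝ) 12, u₁ t) ≤ 3 ∧
  (∫ t in Set.Icc (0 : ℝ) 12, u₂ t) ≤ 6

/-- `d₁ = 1` on `[0,3] ∪ [5,11]`, `0` elsewhere. -/
noncomputable def dOne : ℝ → ℝ :=
  (Set.Icc (0 : ℝ) 3 ∪ Set.Icc (5 : ℝ) 11).indicator fun _ => 1

/-- `d₂ = 1` on `[0,2] ∪ (5,6]`, `2` on `(2,5]`, `0` elsewhere. -/
noncomputable def dTwo : ℝ → ℝ := fun t =>
  (Set.Icc (0 : ℝ) 2 ∪ Set.Ioc (5 : ℝ) 6).indicator (fun _ => (1 : ℝ)) t +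
  (Set.Ioc (2 : ℝ) 5).indicator (fun _ => (2 : ℝ)) t

/-- A policy is causal if its output on `[0,T]` depends only on the demand restricted
to `[0,T]`. -/
def Causal (Pol : (ℝ → ℝ) → ℝ → ℝ × ℝ) : Prop :=
  ∀ da db : ℝ → ℝ, ∀ T : ℝ, (∀ s ∈ Set.Icc (0 : ℝ) T, da s = db s) →
    ∀ s ∈ Set.Icc (0 : ℝ) T, Pol da s = Pol db s


/-!
Each of the two demands leaves no slack in one device. For `d₁`, device 1 is unavailable
after time 5, so device 2 alone serves the demand on `(5, 11]`, which is its whole energy 6;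
hence `u₂` integrates to 0 on `[0, 2]` and `u₁ = 1 - u₂` integrates to 2 there. For `d₂`,
demand 2 on `(2, 5]` forces both devices to full power, so device 1 spends its whole energy 3
there and `u₁` integrates to 0 on `[0, 2]`. A causal policy sees the same demand on `[0, 2]` in
both cases, so it cannot produce both behaviours.
-/

open Set

section Saturation

variable {X : Type*} [MeasurableSpace X] {μ : Measure X} {u : X → ℝ} {s r t : Set X}

theorem integrableOn_of_mem_Icc_zero_one (hm : AEStronglyMeasurable u μ)
    (hs : MeasurableSet s) (hμs : μ s ≠ ⊤) (hb : ∀ x ∈ s, 0 ≤ u x ∧ u x ≤ 1) :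
    IntegrableOn u s μ := by
  refine Measure.integrableOn_of_bounded (M := 1) hμs hm ?_
  filter_upwards [ae_restrict_mem hs] with x hx
  rw [Real.norm_eq_abs, abs_le]
  exact ⟨by linarith [(hb x hx).1], (hb x hx).2⟩

theorem setIntegral_eq_zero_of_budget_spent (hs : MeasurableSet s) (hr : MeasurableSet r)
    (ht : MeasurableSet t)
    (hrs : r ⊆ s) (hts : t ⊆ s) (hrt : Disjoint r t) (hu : IntegrableOn u s μ)
    (hnn : ∀ x ∈ s, 0 ≤ u x) (hone : ∀ x ∈ t, u x = 1)
    (hbud : ∫ x in s, u x ∂μ ≤ μ.real t) :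
    ∫ x in r, u x ∂μ = 0 := by
  have ht_int : ∫ x in t, u x ∂μ = μ.real t := by
    rw [setIntegral_congr_fun ht hone, setIntegral_const, smul_eq_mul, mul_one]
  have hsplit : ∫ x in r ∪ t, u x ∂μ = ∫ x in r, u x ∂μ + ∫ x in t, u x ∂μ :=
    setIntegral_union hrt ht (hu.mono_set hrs) (hu.mono_set hts)
  have hmono : ∫ x in r ∪ t, u x ∂μ ≤ ∫ x in s, u x ∂μ :=
    setIntegral_mono_set hu (ae_restrict_of_forall_mem hs hnn) (union_subset hrs hts).eventuallyLE
  have hr_nonneg : 0 ≤ ∫ x in r, u x ∂μ := setIntegral_nonneg hr fun x hx => hnn x (hrs hx)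
  linarith

end Saturation

theorem Ioc_subset_Icc_zero_twelve {a b : ℝ} (ha : 0 ≤ a) (hb : b ≤ 12) :
    Ioc a b ⊆ Icc 0 12 :=
  Ioc_subset_Icc_self.trans (Icc_subset_Icc ha hb)

theorem twoBatFeasible_indicator {d : ℝ → ℝ} {S₁ S₂ : Set ℝ} (hS₁m : MeasurableSet S₁)
    (hS₂m : MeasurableSet S₂) (hS₁ : S₁ ⊆ Icc 0 5) (hS₂ : S₂ ⊆ Icc 0 12)
    (hd : ∀ t ∈ Icc (0 : ℝ) 12, S₁.indicator 1 t + S₂.indicator 1 t = d t)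
    (hE₁ : volume.real S₁ ≤ 3) (hE₂ : volume.real S₂ ≤ 6) :
    TwoBatFeasible d (S₁.indicator 1) (S₂.indicator 1) := by
  have energy : ∀ S : Set ℝ, MeasurableSet S → S ⊆ Icc 0 12 →
      ∫ t in Icc (0 : ℝ) 12, S.indicator 1 t = volume.real S := fun S hS hS12 => by
    rw [integral_indicator_one hS, measureReal_restrict_apply hS, inter_eq_left.mpr hS12]
  refine ⟨measurable_const.indicator hS₁m, measurable_const.indicator hS₂m, fun t _ => ?_,
    fun t _ h5 => indicator_of_notMem (fun ht => (hS₁ ht).2.not_gt h5) _, hd, ?_, ?_⟩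
  · classical
    simp only [indicator_apply, Pi.one_apply]
    split_ifs <;> norm_num
  · rw [energy S₁ hS₁m (hS₁.trans (Icc_subset_Icc le_rfl (by norm_num)))]
    exact hE₁
  · rw [energy S₂ hS₂m hS₂]
    exact hE₂

theorem twoBatFeasible_dOne :
    TwoBatFeasible dOne ((Icc 0 3).indicator 1) ((Icc 5 11).indicator 1) := by
  refine twoBatFeasible_indicator measurableSet_Icc measurableSet_Icc
    (Icc_subset_Icc le_rfl (by norm_num)) (Icc_subset_Icc (by norm_num) (by norm_num))
    (fun t _ => ?_) (by norm_num [Real.volume_real_Icc_of_le])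
    (by norm_num [Real.volume_real_Icc_of_le])
  rw [dOne, indicator_union_of_disjoint
    (disjoint_left.mpr fun _ hx hx' => by linarith [hx.2, hx'.1])]
  rfl

theorem twoBatFeasible_dTwo :
    TwoBatFeasible dTwo ((Ioc 2 5).indicator 1) ((Icc 0 6).indicator 1) := by
  refine twoBatFeasible_indicator measurableSet_Ioc measurableSet_Icc
    (Ioc_subset_Icc_self.trans (Icc_subset_Icc (by norm_num) le_rfl))
    (Icc_subset_Icc le_rfl (by norm_num)) (fun t ht => ?_)
    (by norm_num [Real.volume_real_Ioc_of_le]) (by norm_num [Real.volume_real_Icc_of_le])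
  obtain ⟨h0, h12⟩ := ht
  simp only [dTwo, indicator_apply, mem_union, mem_Icc, mem_Ioc, Pi.one_apply]
  split_ifs <;> grind

theorem dOne_eq_one_of_mem_Icc {t : ℝ} (ht : t ∈ Icc 0 2) : dOne t = 1 := by
  rw [dOne, indicator_of_mem (mem_union_left _ (Icc_subset_Icc le_rfl (by norm_num) ht))]

theorem dOne_eq_one_of_mem_Ioc {t : ℝ} (ht : t ∈ Ioc 5 11) : dOne t = 1 := by
  rw [dOne, indicator_of_mem (mem_union_right _ (Ioc_subset_Icc_self ht))]

theorem dTwo_eq_one_of_mem_Icc {t : ℝ} (ht : t ∈ Icc 0 2) : dTwo t = 1 := by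
  rw [dTwo, indicator_of_mem (mem_union_left _ ht),
    indicator_of_notMem fun h => h.1.not_ge ht.2]
  norm_num

theorem dTwo_eq_two_of_mem_Ioc {t : ℝ} (ht : t ∈ Ioc 2 5) : dTwo t = 2 := by
  rw [dTwo, indicator_of_mem ht, indicator_of_notMem]
  · norm_num
  rintro (h | h)
  · exact h.2.not_gt ht.1
  · exact h.1.not_ge ht.2

theorem dOne_eqOn_dTwo : EqOn dOne dTwo (Icc 0 2) := fun _ ht => by
  rw [dOne_eq_one_of_mem_Icc ht, dTwo_eq_one_of_mem_Icc ht]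

namespace TwoBatFeasible

variable {d u₁ u₂ : ℝ → ℝ}

theorem integrableOn_fst (h : TwoBatFeasible d u₁ u₂) : IntegrableOn u₁ (Icc 0 12) :=
  integrableOn_of_mem_Icc_zero_one h.1.aestronglyMeasurable measurableSet_Icc
    measure_Icc_lt_top.ne fun t ht => ⟨(h.2.2.1 t ht).1, (h.2.2.1 t ht).2.1⟩

theorem integrableOn_snd (h : TwoBatFeasible d u₁ u₂) : IntegrableOn u₂ (Icc 0 12) :=
  integrableOn_of_mem_Icc_zero_one h.2.1.aestronglyMeasurable measurableSet_Icc
    measure_Icc_lt_top.ne fun t ht => (h.2.2.1 t ht).2.2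

theorem intervalIntegral_fst_add_snd (h : TwoBatFeasible d u₁ u₂)
    (hd : ∀ t ∈ Icc (0 : ℝ) 2, d t = 1) :
    (∫ t in (0 : ℝ)..2, u₁ t) + ∫ t in (0 : ℝ)..2, u₂ t = 2 := by
  have hsub : uIcc (0 : ℝ) 2 ⊆ Icc 0 12 := by
    rw [uIcc_of_le zero_le_two]
    exact Icc_subset_Icc le_rfl (by norm_num)
  rw [← intervalIntegral.integral_add (h.integrableOn_fst.mono_set hsub).intervalIntegrable
    (h.integrableOn_snd.mono_set hsub).intervalIntegrable]
  have hsum : EqOn (fun t => u₁ t + u₂ t) (fun _ => 1) (uIcc 0 2) := fun t ht => by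
    rw [uIcc_of_le zero_le_two] at ht
    exact (h.2.2.2.2.1 t (Icc_subset_Icc le_rfl (by norm_num) ht)).trans (hd t ht)
  rw [intervalIntegral.integral_congr hsum]
  norm_num

theorem intervalIntegral_snd_eq_zero_of_dOne (h : TwoBatFeasible dOne u₁ u₂) :
    ∫ t in (0 : ℝ)..2, u₂ t = 0 := by
  have hint := h.integrableOn_snd
  obtain ⟨-, -, hbound, hidle, hsum, -, hE₂⟩ := h
  have hfull : ∀ t ∈ Ioc (5 : ℝ) 11, u₂ t = 1 := fun t ht => by
    have ht' := Ioc_subset_Icc_zero_twelve (by norm_num) (by norm_num) ht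
    linarith [hsum t ht', hidle t ht' ht.1, dOne_eq_one_of_mem_Ioc ht]
  rw [intervalIntegral.integral_of_le zero_le_two]
  refine setIntegral_eq_zero_of_budget_spent measurableSet_Icc measurableSet_Ioc
    measurableSet_Ioc (Ioc_subset_Icc_zero_twelve le_rfl (by norm_num))
    (Ioc_subset_Icc_zero_twelve (by norm_num) (by norm_num))
    (Ioc_disjoint_Ioc_of_le (by norm_num))
    hint (fun t ht => (hbound t ht).2.2.1) hfull ?_
  rw [Real.volume_real_Ioc_of_le (by norm_num)]
  linarith

theorem intervalIntegral_fst_eq_zero_of_dTwo (h : TwoBatFeasible dTwo u₁ u₂) :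
    ∫ t in (0 : ℝ)..2, u₁ t = 0 := by
  have hint := h.integrableOn_fst
  obtain ⟨-, -, hbound, -, hsum, hE₁, -⟩ := h
  have hfull : ∀ t ∈ Ioc (2 : ℝ) 5, u₁ t = 1 := fun t ht => by
    have ht' := Ioc_subset_Icc_zero_twelve (by norm_num) (by norm_num) ht
    linarith [hsum t ht', (hbound t ht').2.1, (hbound t ht').2.2.2, dTwo_eq_two_of_mem_Ioc ht]
  rw [intervalIntegral.integral_of_le zero_le_two]
  refine setIntegral_eq_zero_of_budget_spent measurableSet_Icc measurableSet_Ioc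
    measurableSet_Ioc (Ioc_subset_Icc_zero_twelve le_rfl (by norm_num))
    (Ioc_subset_Icc_zero_twelve (by norm_num) (by norm_num)) (Ioc_disjoint_Ioc_of_le le_rfl)
    hint (fun t ht => (hbound t ht).1) hfull ?_
  rw [Real.volume_real_Ioc_of_le (by norm_num)]
  linarith

theorem intervalIntegral_fst_eq_two_of_dOne (h : TwoBatFeasible dOne u₁ u₂) :
    ∫ t in (0 : ℝ)..2, u₁ t = 2 := by
  linarith [h.intervalIntegral_fst_add_snd fun _ => dOne_eq_one_of_mem_Icc,
    h.intervalIntegral_snd_eq_zero_of_dOne]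

theorem intervalIntegral_snd_eq_two_of_dTwo (h : TwoBatFeasible dTwo u₁ u₂) :
    ∫ t in (0 : ℝ)..2, u₂ t = 2 := by
  linarith [h.intervalIntegral_fst_add_snd fun _ => dTwo_eq_one_of_mem_Icc,
    h.intervalIntegral_fst_eq_zero_of_dTwo]

end TwoBatFeasible

theorem Causal.intervalIntegral_fst_eq {Pol : (ℝ → ℝ) → ℝ → ℝ × ℝ} (hPol : Causal Pol)
    {da db : ℝ → ℝ} {T : ℝ} (hT : 0 ≤ T) (hab : ∀ s ∈ Icc 0 T, da s = db s) :
    ∫ t in (0 : ℝ)..T, (Pol da t).1 = ∫ t in (0 : ℝ)..T, (Pol db t).1 :=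
  intervalIntegral.integral_congr fun s hs => by
    rw [uIcc_of_le hT] at hs
    simp only [hPol da db T hab s hs]

/-- No causal policy can dispatch every feasible demand signal for this fleet:
`d₁` and `d₂` are both feasible and agree on `[0,2]`, yet every feasible dispatch of
`d₁` takes 2 units of energy from device 1 on `[0,2]`, while every feasible dispatch of
`d₂` takes 2 units from device 2 (and none from device 1) there. -/
theorem no_causal_dispatch_policy :
    (∃ u₁ u₂, TwoBatFeasible dOne u₁ u₂) ∧
    (∃ u₁ u₂, TwoBatFeasible dTwo u₁ u₂) ∧
    (∀ t ∈ Set.Icc (0 : ℝ) 2, dOne t = dTwo t) ∧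
    (∀ u₁ u₂, TwoBatFeasible dOne u₁ u₂ → (∫ t in (0:ℝ)..2, u₁ t) = 2) ∧
    (∀ u₁ u₂, TwoBatFeasible dTwo u₁ u₂ →
      (∫ t in (0:ℝ)..2, u₂ t) = 2 ∧ (∫ t in (0:ℝ)..2, u₁ t) = 0) ∧
    ¬ ∃ Pol : (ℝ → ℝ) → ℝ → ℝ × ℝ, Causal Pol ∧
        ∀ d : ℝ → ℝ, (∃ u₁ u₂, TwoBatFeasible d u₁ u₂) →
          TwoBatFeasible d (fun t => (Pol d t).1) (fun t => (Pol d t).2) := by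
  refine ⟨⟨_, _, twoBatFeasible_dOne⟩, ⟨_, _, twoBatFeasible_dTwo⟩,
    fun _ ht => dOne_eqOn_dTwo ht,
    fun _ _ h => h.intervalIntegral_fst_eq_two_of_dOne,
    fun _ _ h => ⟨h.intervalIntegral_snd_eq_two_of_dTwo, h.intervalIntegral_fst_eq_zero_of_dTwo⟩,
    ?_⟩
  rintro ⟨Pol, hPol, hdispatch⟩
  have hagree := hPol.intervalIntegral_fst_eq zero_le_two fun _ ht => dOne_eqOn_dTwo ht
  rw [(hdispatch dOne ⟨_, _, twoBatFeasible_dOne⟩).intervalIntegral_fst_eq_two_of_dOne,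
    (hdispatch dTwo ⟨_, _, twoBatFeasible_dTwo⟩).intervalIntegral_fst_eq_zero_of_dTwo] at hagree
  exact two_ne_zero hagree
end

section
/- (Sufficiency of aggregate constraints in a simplified discrete homogeneous setting.) Let T = {1,…,T} and let N devices have unit rated power P̄_j = 1, full availability A_j = T, and initial energies x_j(0) ≥ 0. A demand d : T → [0,∞) is feasible if (and only if) for every subset W ⊆ T, ∑_{k∈W} d(k) ≤ ∑_{j=1}^N min{card(W), x_j(0)}. -/
/-!
Necessity: device `j` serves at most `min (card W) (x j)` energy during a window `W`.

Sufficiency, by induction on the set of slots: serve the demand `d t` of one slot `t` by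
water-filling, i.e. device `j` contributes `min 1 (max 0 (x j - τ))`, the part of its energy
above a common level `τ`, capped at its unit power; `τ ≥ 0` is chosen by the intermediate value
theorem so that the contributions add up to `d t`. The remaining energies again satisfy the
aggregate constraints on the other slots: a window `W` with `card W ≤ τ` still sees every device
at energy at least `min (card W) (x j)`, and for `card W > τ` the constraint for `W ∪ {t}` is
exactly what is needed.
-/

open Finset

namespace DiscreteHomogeneous

variable {ι κ : Type*} [Fintype ι]

def Feasible (S : Finset κ) (x : ι → ℝ) (d : κ → ℝ) : Prop :=
  ∃ u : ι → κ → ℝ,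
    (∀ j, ∀ k ∈ S, 0 ≤ u j k ∧ u j k ≤ 1) ∧
    (∀ k ∈ S, ∑ j, u j k = d k) ∧
    (∀ j, ∑ k ∈ S, u j k ≤ x j)

def AggregateConstraints (S : Finset κ) (x : ι → ℝ) (d : κ → ℝ) : Prop :=
  ∀ W ⊆ S, ∑ k ∈ W, d k ≤ ∑ j, min (#W : ℝ) (x j)

theorem Feasible.aggregateConstraints {S : Finset κ} {x : ι → ℝ} {d : κ → ℝ}
    (h : Feasible S x d) : AggregateConstraints S x d := by
  obtain ⟨u, hu, hdemand, henergy⟩ := h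
  intro W hW
  calc ∑ k ∈ W, d k = ∑ j, ∑ k ∈ W, u j k := by
        rw [sum_comm]
        exact sum_congr rfl fun k hk => (hdemand k (hW hk)).symm
    _ ≤ ∑ j, min (#W : ℝ) (x j) := by
        refine sum_le_sum fun j _ => le_min ?_ ?_
        · simpa using sum_le_sum fun k hk => (hu j k (hW hk)).2
        · exact (sum_le_sum_of_subset_of_nonneg hW fun k hk _ => (hu j k hk).1).trans (henergy j)

def cappedExcess (τ x : ℝ) : ℝ := min 1 (max 0 (x - τ))

theorem cappedExcess_nonneg (τ x : ℝ) : 0 ≤ cappedExcess τ x :=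
  le_min zero_le_one (le_max_left _ _)

theorem cappedExcess_le_one (τ x : ℝ) : cappedExcess τ x ≤ 1 :=
  min_le_left _ _

theorem cappedExcess_le_self {τ x : ℝ} (hτ : 0 ≤ τ) (hx : 0 ≤ x) : cappedExcess τ x ≤ x :=
  (min_le_right _ _).trans (max_le hx (by linarith))

theorem cappedExcess_of_le {τ x : ℝ} (h : x ≤ τ) : cappedExcess τ x = 0 := by
  simp [cappedExcess, h]

theorem cappedExcess_zero {x : ℝ} (hx : 0 ≤ x) : cappedExcess 0 x = min 1 x := by
  rw [cappedExcess, sub_zero, max_eq_right hx]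

theorem continuous_cappedExcess (x : ℝ) : Continuous fun τ => cappedExcess τ x := by
  unfold cappedExcess
  fun_prop

theorem min_le_min_sub_cappedExcess {m τ : ℝ} (x : ℝ) (h : m ≤ τ) :
    min m x ≤ min m (x - cappedExcess τ x) := by
  simp only [cappedExcess, min_def, max_def]
  split_ifs <;> linarith

theorem min_add_one_le_min_sub_cappedExcess_add {m τ : ℝ} (x : ℝ) (h : τ < m) :
    min (m + 1) x ≤ min m (x - cappedExcess τ x) + cappedExcess τ x := by
  simp only [cappedExcess, min_def, max_def]
  split_ifs <;> linarith

theorem exists_sum_cappedExcess_eq {x : ι → ℝ} (hx : ∀ j, 0 ≤ x j) {D : ℝ} (hD₀ : 0 ≤ D)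
    (hD : D ≤ ∑ j, min 1 (x j)) : ∃ τ, 0 ≤ τ ∧ ∑ j, cappedExcess τ (x j) = D := by
  set g : ℝ → ℝ := fun τ => ∑ j, cappedExcess τ (x j)
  set M := ∑ j, x j
  have hg_zero : g 0 = ∑ j, min 1 (x j) := sum_congr rfl fun j _ => cappedExcess_zero (hx j)
  have hg_M : g M = 0 :=
    sum_eq_zero fun j _ => cappedExcess_of_le (single_le_sum (fun i _ => hx i) (mem_univ j))
  have hcont : ContinuousOn g (Set.Icc 0 M) :=
    (continuous_finsetSum _ fun j _ => continuous_cappedExcess (x j)).continuousOn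
  obtain ⟨τ, hτ, hgτ⟩ := intermediate_value_Icc' (sum_nonneg fun j _ => hx j) hcont
    (show D ∈ Set.Icc (g M) (g 0) by rw [hg_M, hg_zero]; exact ⟨hD₀, hD⟩)
  exact ⟨τ, hτ.1, hgτ⟩

variable [DecidableEq κ]

theorem AggregateConstraints.sub_cappedExcess {S : Finset κ} {t : κ} (ht : t ∉ S) {x : ι → ℝ}
    {d : κ → ℝ} (h : AggregateConstraints (insert t S) x d) {τ : ℝ}
    (hτ : ∑ j, cappedExcess τ (x j) = d t) :
    AggregateConstraints S (fun j => x j - cappedExcess τ (x j)) d := by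
  intro W hW
  rcases le_or_gt (#W : ℝ) τ with hWτ | hτW
  · exact (h W (hW.trans (subset_insert t S))).trans
      (sum_le_sum fun j _ => min_le_min_sub_cappedExcess (x j) hWτ)
  · have htW : t ∉ W := fun htW => ht (hW htW)
    have key := h (insert t W) (insert_subset_insert t hW)
    rw [sum_insert htW, card_insert_of_notMem htW, Nat.cast_succ] at key
    have hsplit := sum_le_sum fun j (_ : j ∈ univ) =>
      min_add_one_le_min_sub_cappedExcess_add (x j) hτW
    rw [sum_add_distrib, hτ] at hsplit
    linarith

theorem Feasible.insert {S : Finset κ} {t : κ} (ht : t ∉ S) {x w : ι → ℝ} {d : κ → ℝ}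
    (h : Feasible S (fun j => x j - w j) d) (hw : ∀ j, 0 ≤ w j ∧ w j ≤ 1)
    (hsum : ∑ j, w j = d t) : Feasible (insert t S) x d := by
  obtain ⟨u, hu, hdemand, henergy⟩ := h
  refine ⟨fun j => Function.update (u j) t (w j), ?_, ?_, ?_⟩
  · intro j k hk
    rcases eq_or_ne k t with rfl | hkt
    · simpa using hw j
    · simpa [hkt] using hu j k ((mem_insert.mp hk).resolve_left hkt)
  · intro k hk
    rcases eq_or_ne k t with rfl | hkt
    · simpa using hsum
    · simpa [hkt] using hdemand k ((mem_insert.mp hk).resolve_left hkt)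
  · intro j
    have := henergy j
    simp only [sum_insert ht, sum_update_of_notMem ht, Function.update_self] at this ⊢
    linarith

theorem AggregateConstraints.feasible {S : Finset κ} {x : ι → ℝ} {d : κ → ℝ}
    (hx : ∀ j, 0 ≤ x j) (hd : ∀ k ∈ S, 0 ≤ d k) (h : AggregateConstraints S x d) :
    Feasible S x d := by
  induction S using Finset.induction_on generalizing x with
  | empty => exact ⟨fun _ _ => 0, by simp, by simp, by simpa using hx⟩
  | insert t S ht ih =>
    have hslot : d t ≤ ∑ j, min 1 (x j) := by
      simpa using h {t} (singleton_subset_iff.mpr (mem_insert_self t S))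
    obtain ⟨τ, hτ, hsum⟩ := exists_sum_cappedExcess_eq hx (hd t (mem_insert_self t S)) hslot
    exact Feasible.insert ht (ih (fun j => sub_nonneg.mpr (cappedExcess_le_self hτ (hx j)))
      (fun k hk => hd k (mem_insert_of_mem hk)) (h.sub_cappedExcess ht hsum))
      (fun j => ⟨cappedExcess_nonneg τ (x j), cappedExcess_le_one τ (x j)⟩) hsum

end DiscreteHomogeneous

theorem discrete_homogeneous_feasibility_iff_general
    (N T : ℕ) (x0 : Fin N → ℝ) (hx0 : ∀ j, 0 ≤ x0 j)
    (d : ℕ → ℝ) (hd : ∀ k ∈ Finset.Icc 1 T, 0 ≤ d k) :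
    (∃ u : Fin N → ℕ → ℝ,
      (∀ j, ∀ k ∈ Finset.Icc 1 T, 0 ≤ u j k ∧ u j k ≤ 1) ∧
      (∀ k ∈ Finset.Icc 1 T, ∑ j, u j k = d k) ∧
      (∀ j, ∑ k ∈ Finset.Icc 1 T, u j k ≤ x0 j)) ↔
    (∀ W ⊆ Finset.Icc 1 T, ∑ k ∈ W, d k ≤ ∑ j, min (W.card : ℝ) (x0 j)) :=
  ⟨DiscreteHomogeneous.Feasible.aggregateConstraints,
    DiscreteHomogeneous.AggregateConstraints.feasible hx0 hd⟩

/-- Sufficiency (and necessity) of the aggregate constraints in the discrete homogeneous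
full-availability setting: `d` is feasible iff for every window `W`,
`∑_{k∈W} d(k) ≤ ∑_j min{card W, x_j(0)}`. -/
theorem discrete_homogeneous_feasibility_iff
    (N T : ℕ) (hN : 0 < N) (x0 : Fin N → ℝ) (hx0 : ∀ j, 0 ≤ x0 j)
    (d : ℕ → ℝ) (hd : ∀ k ∈ Finset.Icc 1 T, 0 ≤ d k) :
    (∃ u : Fin N → ℕ → ℝ,
      (∀ j, ∀ k ∈ Finset.Icc 1 T, 0 ≤ u j k ∧ u j k ≤ 1) ∧
      (∀ k ∈ Finset.Icc 1 T, ∑ j, u j k = d k) ∧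
      (∀ j, ∑ k ∈ Finset.Icc 1 T, u j k ≤ x0 j)) ↔
    (∀ W ⊆ Finset.Icc 1 T, ∑ k ∈ W, d k ≤ ∑ j, min (W.card : ℝ) (x0 j)) :=
  discrete_homogeneous_feasibility_iff_general N T x0 hx0 d hd
end

section
/- (Finite-dimensional key identity for the GGDDF policy, case of full saturation.) Fix a finite index set N partitioned into nonempty level sets N_{τ_1},…,N_{τ_G} by distinct levels τ_1 > … > τ_G, rated powers P̄_j > 0, a subset S ⊆ N of 'available' devices, and d ≥ 0. Define K_j = P̄_j if j ∈ N_{τ_k} and ∑_{h≤k} ∑_{i∈N_{τ_h} ∩ S} P̄_i ≤ d; K_j = 0 if j ∈ N_{τ_k} and ∑_{h<k} ∑_{i∈N_{τ_h} ∩ S} P̄_i > d (ignoring the fractional case). Define similarly K̃_j with S replaced by N and d replaced by d̃ = d + ∑_{j∉S} K_j. Then for every index i whose level-index k satisfies ∑_{h≤k} ∑_{j∈N_{τ_h}∩S} P̄_j ≤ d, one has K̃_i(d̃) = P̄_i = K_i, i.e., ∑_{h≤k} ∑_{j∈N_{τ_h}} P̄_j ≤ d̃. -/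
open Finset

lemma sum_filter_le_sum_filter_of_imp {ι : Type*} [Fintype ι] {f : ι → ℝ} (hf : ∀ j, 0 ≤ f j)
    {p q : ι → Prop} [DecidablePred p] [DecidablePred q] (hpq : ∀ j, p j → q j) :
    ∑ j ∈ univ.filter p, f j ≤ ∑ j ∈ univ.filter q, f j :=
  sum_le_sum_of_subset_of_nonneg (monotone_filter_right _ fun j _ => hpq j) fun j _ _ => hf j

theorem ggddf_key_identity_saturated_general
    {ι : Type*} [Fintype ι] [DecidableEq ι]
    (level : ι → ℕ) (P : ι → ℝ) (hP : ∀ j, 0 < P j)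
    (S : Finset ι) (d : ℝ) (K : ι → ℝ)
    (hK_nonneg : ∀ j, 0 ≤ K j)
    (hK_full : ∀ j : ι,
      (∑ i ∈ Finset.univ.filter (fun i => level i ≤ level j ∧ i ∈ S), P i) ≤ d →
      K j = P j) :
    ∀ i : ι,
      (∑ j ∈ Finset.univ.filter (fun j => level j ≤ level i ∧ j ∈ S), P j) ≤ d →
      (∑ j ∈ Finset.univ.filter (fun j => level j ≤ level i), P j) ≤
        d + ∑ j ∈ Finset.univ.filter (fun j => j ∉ S), K j := by
  intro i hi
  -- Saturation at level `i` propagates to every lower level.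
  have hK_eq : ∀ j, level j ≤ level i → K j = P j := fun j hj =>
    hK_full j <| (sum_filter_le_sum_filter_of_imp (fun k => (hP k).le)
      fun k hk => ⟨hk.1.trans hj, hk.2⟩).trans hi
  calc ∑ j ∈ univ.filter (fun j => level j ≤ level i), P j
      = ∑ j ∈ univ.filter (fun j => level j ≤ level i ∧ j ∈ S), P j
        + ∑ j ∈ univ.filter (fun j => level j ≤ level i ∧ j ∉ S), P j := by
        rw [← filter_filter, ← filter_filter, sum_filter_add_sum_filter_not]
    _ = ∑ j ∈ univ.filter (fun j => level j ≤ level i ∧ j ∈ S), P j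
        + ∑ j ∈ univ.filter (fun j => level j ≤ level i ∧ j ∉ S), K j := by
        congr 1
        exact sum_congr rfl fun j hj => (hK_eq j (mem_filter.1 hj).2.1).symm
    _ ≤ d + ∑ j ∈ univ.filter (fun j => j ∉ S), K j :=
        add_le_add hi (sum_filter_le_sum_filter_of_imp hK_nonneg fun j hj => hj.2)

/-- Key identity for the GGDDF policy, full-saturation case: if the available power at
levels up to that of device `i` does not exceed `d`, then the total power at those
levels does not exceed the augmented demand `d̃ = d + ∑_{j∉S} K_j`; hence the
unconstrained priority policy also assigns full rated power to `i`. -/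
theorem ggddf_key_identity_saturated
    {ι : Type*} [Fintype ι] [DecidableEq ι]
    (level : ι → ℕ) (P : ι → ℝ) (hP : ∀ j, 0 < P j)
    (S : Finset ι) (d : ℝ) (hd : 0 ≤ d) (K : ι → ℝ)
    (hK_nonneg : ∀ j, 0 ≤ K j)
    (hK_full : ∀ j : ι,
      (∑ i ∈ Finset.univ.filter (fun i => level i ≤ level j ∧ i ∈ S), P i) ≤ d →
      K j = P j) :
    ∀ i : ι,
      (∑ j ∈ Finset.univ.filter (fun j => level j ≤ level i ∧ j ∈ S), P j) ≤ d →
      (∑ j ∈ Finset.univ.filter (fun j => level j ≤ level i), P j) ≤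
        d + ∑ j ∈ Finset.univ.filter (fun j => j ∉ S), K j :=
  ggddf_key_identity_saturated_general level P hP S d K hK_nonneg hK_full
end

section
/- (Finite-dimensional key identity, zero case.) In the setting of the previous statement, if i lies in level k with d < ∑_{h<k} ∑_{j∈N_{τ_h}∩S} P̄_j, and K_j = 0 for all j in levels h ≥ k, and 0 ≤ K_j ≤ P̄_j for all j in levels h < k, then d + ∑_{j∉S} K_j < ∑_{h<k} ∑_{j∈N_{τ_h}} P̄_j; hence the unconstrained priority policy at augmented demand d̃ = d + ∑_{j∉S} K_j also assigns 0 to device i. -/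
open Finset

section

variable {ι M : Type*} [AddCommMonoid M] (s : Finset ι) (p q : ι → Prop) [DecidablePred p]
  [DecidablePred q]

theorem sum_filter_and_add_sum_filter_and_not (f : ι → M) :
    ∑ j ∈ s.filter (fun j => p j ∧ q j), f j + ∑ j ∈ s.filter (fun j => p j ∧ ¬ q j), f j
      = ∑ j ∈ s.filter p, f j := by
  simpa only [filter_filter] using sum_filter_add_sum_filter_not (s.filter p) q f

theorem sum_filter_not_le_sum_filter_and_not [PartialOrder M] [IsOrderedAddMonoid M]
    {K P : ι → M} (hK_zero : ∀ j, ¬ p j → K j = 0) (hK_le : ∀ j, p j → K j ≤ P j) :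
    ∑ j ∈ s.filter (fun j => ¬ q j), K j ≤ ∑ j ∈ s.filter (fun j => p j ∧ ¬ q j), P j := by
  have hsupp : ∑ j ∈ s.filter (fun j => ¬ q j), K j
      = ∑ j ∈ s.filter (fun j => p j ∧ ¬ q j), K j := by
    rw [← sum_filter_of_ne (p := p) fun j _ hj => not_imp_comm.mp (hK_zero j) hj,
      filter_filter]
    simp only [and_comm]
  rw [hsupp]
  exact sum_le_sum fun j hj => hK_le j (mem_filter.mp hj).2.1

end

theorem ggddf_key_identity_zero_general
    {ι : Type*} [Fintype ι] [DecidableEq ι]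
    (level : ι → ℕ) (P : ι → ℝ)
    (S : Finset ι) (d : ℝ) (K Kt : ι → ℝ) (i : ι)
    (hlt : d < ∑ j ∈ Finset.univ.filter (fun j => level j < level i ∧ j ∈ S), P j)
    (hK_zero : ∀ j : ι, level i ≤ level j → K j = 0)
    (hK_bd : ∀ j : ι, level j < level i → 0 ≤ K j ∧ K j ≤ P j)
    (hKt : (d + ∑ j ∈ Finset.univ.filter (fun j => j ∉ S), K j) <
        (∑ j ∈ Finset.univ.filter (fun j => level j < level i), P j) → Kt i = 0) :
    (d + ∑ j ∈ Finset.univ.filter (fun j => j ∉ S), K j) <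
      (∑ j ∈ Finset.univ.filter (fun j => level j < level i), P j) ∧ Kt i = 0 := by
  have hunavail : ∑ j ∈ univ.filter (fun j => j ∉ S), K j
      ≤ ∑ j ∈ univ.filter (fun j => level j < level i ∧ j ∉ S), P j :=
    sum_filter_not_le_sum_filter_and_not univ (fun j => level j < level i) (· ∈ S)
      (fun j hj => hK_zero j (not_lt.mp hj)) (fun j hj => (hK_bd j hj).2)
  have hdemand : d + ∑ j ∈ univ.filter (fun j => j ∉ S), K j
      < ∑ j ∈ univ.filter (fun j => level j < level i), P j := by
    rw [← sum_filter_and_add_sum_filter_and_not univ _ (· ∈ S) P]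
    exact add_lt_add_of_lt_of_le hlt hunavail
  exact ⟨hdemand, hKt hdemand⟩

/-- Key identity for the GGDDF policy, zero case: if the available power at levels
strictly above that of device `i` already exceeds `d`, and the policy assigns zero at
level of `i` and below, then the augmented demand `d + ∑_{j∉S} K_j` is still below the
total power of the strictly higher-priority levels; hence the unconstrained priority
policy at the augmented demand also assigns `0` to device `i`. -/
theorem ggddf_key_identity_zero
    {ι : Type*} [Fintype ι] [DecidableEq ι]
    (level : ι → ℕ) (P : ι → ℝ) (hP : ∀ j, 0 < P j)
    (S : Finset ι) (d : ℝ) (hd : 0 ≤ d) (K Kt : ι → ℝ) (i : ι)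
    (hlt : d < ∑ j ∈ Finset.univ.filter (fun j => level j < level i ∧ j ∈ S), P j)
    (hK_zero : ∀ j : ι, level i ≤ level j → K j = 0)
    (hK_bd : ∀ j : ι, level j < level i → 0 ≤ K j ∧ K j ≤ P j)
    (hKt : (d + ∑ j ∈ Finset.univ.filter (fun j => j ∉ S), K j) <
        (∑ j ∈ Finset.univ.filter (fun j => level j < level i), P j) → Kt i = 0) :
    (d + ∑ j ∈ Finset.univ.filter (fun j => j ∉ S), K j) <
      (∑ j ∈ Finset.univ.filter (fun j => level j < level i), P j) ∧ Kt i = 0 :=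
  ggddf_key_identity_zero_general level P S d K Kt i hlt hK_zero hK_bd hKt
end
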